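/- Fix d ≥ 2, α ∈ (0,d], and m with 1 ≤ m ≤ d. Let K ⊂ ℝ^d be a compact smooth m-dimensional embedded submanifold of ℝ^d and let Q : ℝ^d → ℝ be continuously differentiable. For n ≥ 2 and points x_2,…,x_n ∈ K define f : ℝ^d → ℝ by f(y) = exp(−∑_{j=2}^n |y−x_j|^{−α} − 2nQ(y)) for y ∉ {x_2,…,x_n}, and f(x_j) = 0. Let μ be a finite positive Borel measure on K for which there exist r₀ > 0 and T > 0 with μ(B(x,r)) ≥ r^T for all x ∈ K and 0 < r < r₀. Then there exist constants M_n > 0 with M_n^{1/n} → 1 as n → ∞ such that for all n ≥ 2 and all choices x_2,…,x_n ∈ K, sup_{y ∈ K} f(y) ≤ M_n ∫_K f dμ. -/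

import Mathlib

open MeasureTheory Manifold Filter
open scoped Classical

/-- The Riesz-discretization function `f(y) = exp(-∑_j |y - x_j|^{-α} - 2nQ(y))` for
`y ∉ {x_2,…,x_n}`, extended by `0` at the points `x_j`. -/
noncomputable def rieszF {d : ℕ} (α : ℝ) (n : ℕ) (Q : EuclideanSpace ℝ (Fin d) → ℝ)
    (x : Fin (n - 1) → EuclideanSpace ℝ (Fin d)) (y : EuclideanSpace ℝ (Fin d)) : ℝ :=
  if y ∈ Set.range x then 0
  else Real.exp (-(∑ j, ‖y - x j‖ ^ (-α)) - 2 * (n : ℝ) * Q y)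

/-! `K` is compact and contains a continuum `C`, the image of a connected component of the
manifold, with two points at distance `D > 0`. Projecting `C` onto `dist · b` shows that for any
`n - 1` charges some point of `C` is at distance `≳ D / n` from all of them; there
`f ≥ exp (-O(n ^ (α + 1)))` on a ball of radius `≳ 1 / n`, so the mass density condition bounds
`∫_K f dμ` from below. If `y` is so close to a charge that its own term `|y - x_j| ^ (-α)` beats
this exponent, `f y` is below the integral. Otherwise every term of the potential, and `Q`, move
by at most `1 / n` on a ball about `y` whose radius `γ_n` is polynomial in `1 / n`, so
`f y ≤ e³ γ_n ^ (-T) ∫_K f dμ`, and `(e³ γ_n ^ (-T)) ^ (1 / n) → 1`. -/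

open Real Metric Set Asymptotics Topology

/-- Eventually `n ^ (-C) ≤ u n ≤ n ^ C` for some `C`. -/
def PolyBounded (u : ℕ → ℝ) : Prop :=
  (∀ᶠ n in atTop, 0 < u n) ∧ (fun n => log (u n)) =O[atTop] (fun n => log (n : ℝ))

namespace PolyBounded

variable {u v w : ℕ → ℝ}

lemma of_abs_log_le (hw : ∀ᶠ n in atTop, 0 < w n) (hu : PolyBounded u) (hv : PolyBounded v)
    (h : ∀ᶠ n in atTop, |log (w n)| ≤ |log (u n)| + |log (v n)|) : PolyBounded w := by
  refine ⟨hw, (IsBigO.of_bound' ?_).trans (hu.2.norm_left.add hv.2.norm_left)⟩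
  filter_upwards [h] with n hn
  simp only [norm_eq_abs]
  exact hn.trans (le_abs_self _)

lemma const {c : ℝ} (hc : 0 < c) : PolyBounded fun _ => c := by
  refine ⟨.of_forall fun _ => hc, (isBigO_const_one ℝ (log c) atTop).trans ?_⟩
  refine (isLittleO_one_left_iff ℝ).2 ?_ |>.isBigO
  exact tendsto_norm_atTop_atTop.comp (tendsto_log_atTop.comp tendsto_natCast_atTop_atTop)

lemma natCast : PolyBounded fun n => (n : ℝ) :=
  ⟨(eventually_gt_atTop 0).mono fun _ hn => Nat.cast_pos.2 hn, isBigO_refl _ _⟩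

lemma mul (hu : PolyBounded u) (hv : PolyBounded v) : PolyBounded fun n => u n * v n := by
  refine ⟨(hu.1.and hv.1).mono fun n h => mul_pos h.1 h.2, (hu.2.add hv.2).congr' ?_ .rfl⟩
  filter_upwards [hu.1, hv.1] with n hun hvn
  exact (log_mul hun.ne' hvn.ne').symm

lemma inv (hu : PolyBounded u) : PolyBounded fun n => (u n)⁻¹ :=
  ⟨hu.1.mono fun _ h => inv_pos.2 h, by simpa only [log_inv] using hu.2.neg_left⟩

lemma div (hu : PolyBounded u) (hv : PolyBounded v) : PolyBounded fun n => u n / v n := by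
  simpa only [div_eq_mul_inv] using hu.mul hv.inv

lemma rpow (hu : PolyBounded u) (c : ℝ) : PolyBounded fun n => u n ^ c := by
  refine ⟨hu.1.mono fun _ h => rpow_pos_of_pos h c, (hu.2.const_mul_left c).congr' ?_ .rfl⟩
  filter_upwards [hu.1] with n hn
  exact (log_rpow hn c).symm

lemma of_eq_or_eq (hu : PolyBounded u) (hv : PolyBounded v)
    (h : ∀ᶠ n in atTop, w n = u n ∨ w n = v n) : PolyBounded w := by
  refine of_abs_log_le ?_ hu hv ?_
  · filter_upwards [h, hu.1, hv.1] with n hn hun hvn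
    rcases hn with hn | hn <;> rw [hn] <;> assumption
  · filter_upwards [h] with n hn
    rcases hn with hn | hn <;> rw [hn] <;> simp

lemma min (hu : PolyBounded u) (hv : PolyBounded v) : PolyBounded fun n => min (u n) (v n) :=
  hu.of_eq_or_eq hv (.of_forall fun _ => min_choice _ _)

lemma max (hu : PolyBounded u) (hv : PolyBounded v) : PolyBounded fun n => max (u n) (v n) :=
  hu.of_eq_or_eq hv (.of_forall fun _ => max_choice _ _)

lemma of_le_of_le (hu : PolyBounded u) (hv : PolyBounded v)
    (h : ∀ᶠ n in atTop, u n ≤ w n ∧ w n ≤ v n) : PolyBounded w := by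
  have hw : ∀ᶠ n in atTop, 0 < w n := by
    filter_upwards [h, hu.1] with n hn hun using hun.trans_le hn.1
  refine of_abs_log_le hw hu hv ?_
  filter_upwards [h, hu.1, hw] with n hn hun hwn
  have h₁ := log_le_log hun hn.1
  have h₂ := log_le_log hwn hn.2
  rw [abs_le]
  constructor <;> linarith [neg_abs_le (log (u n)), le_abs_self (log (v n)), abs_nonneg (log (u n)),
    abs_nonneg (log (v n))]

lemma add (hu : PolyBounded u) (hv : PolyBounded v) : PolyBounded fun n => u n + v n := by
  refine hu.of_le_of_le ((const two_pos).mul (hu.max hv)) ?_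
  filter_upwards [hv.1] with n hvn
  constructor <;> linarith [le_max_left (u n) (v n), le_max_right (u n) (v n)]

lemma isLittleO_log (hu : PolyBounded u) : (fun n => log (u n)) =o[atTop] (fun n => (n : ℝ)) :=
  hu.2.trans_isLittleO (isLittleO_log_id_atTop.comp_tendsto tendsto_natCast_atTop_atTop)

end PolyBounded

lemma IsPreconnected.exists_forall_le_dist {X ι : Type*} [PseudoMetricSpace X] [Fintype ι]
    {C : Set X} (hC : IsPreconnected C) {a b : X} (ha : a ∈ C) (hb : b ∈ C) (x : ι → X) {s : ℝ}
    (h : 2 * Fintype.card ι * s < dist a b) : ∃ z ∈ C, ∀ i, s ≤ dist z (x i) := by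
  by_contra! hcon
  have hs : 0 < s := by
    obtain ⟨i, hi⟩ := hcon a ha
    exact dist_nonneg.trans_lt hi
  -- `dist · b` is 1-Lipschitz and maps `C` onto an interval containing `[0, dist a b]`
  have hcover : Icc 0 (dist a b) ⊆ ⋃ i, Ioo (dist (x i) b - s) (dist (x i) b + s) := by
    intro t ht
    obtain ⟨z, hz, rfl : dist z b = t⟩ :=
      (hC.image _ (continuous_id.dist continuous_const).continuousOn).Icc_subset
        ⟨b, hb, dist_self b⟩ ⟨a, ha, rfl⟩ ht
    obtain ⟨i, hi⟩ := hcon z hz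
    have := abs_sub_lt_iff.1 ((abs_dist_sub_le z (x i) b).trans_lt hi)
    exact mem_iUnion.2 ⟨i, by constructor <;> linarith⟩
  have hvol := (measure_mono hcover).trans (measure_iUnion_fintype_le volume _)
  simp only [Real.volume_Icc, Real.volume_Ioo, sub_zero, add_sub_sub_cancel, Finset.sum_const,
    Finset.card_univ, nsmul_eq_mul] at hvol
  rw [← ENNReal.ofReal_natCast, ← ENNReal.ofReal_mul (by positivity),
    ENNReal.ofReal_le_ofReal_iff (by positivity)] at hvol
  linarith

lemma ChartedSpace.nontrivial_connectedComponent {H M : Type*} [TopologicalSpace H]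
    [LocallyConnectedSpace H] [∀ x : H, (𝓝[≠] x).NeBot] [TopologicalSpace M] [ChartedSpace H M]
    (p : M) : (connectedComponent p).Nontrivial := by
  have := ChartedSpace.locallyConnectedSpace H M
  by_contra hp
  have hopen : IsOpen {p} := by
    rw [← (not_nontrivial_iff.1 hp).eq_singleton_of_mem mem_connectedComponent]
    exact isOpen_connectedComponent
  have := (chartAt H p).isOpen_image_of_subset_source hopen
    (singleton_subset_iff.2 (mem_chart_source H p))
  rw [image_singleton] at this
  exact not_isOpen_singleton _ this

def HasMassDensity {X : Type*} [PseudoMetricSpace X] [MeasurableSpace X] (μ : Measure X)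
    (K : Set X) (r₀ T : ℝ) : Prop :=
  ∀ x ∈ K, ∀ r : ℝ, 0 < r → r < r₀ → ENNReal.ofReal (r ^ T) ≤ μ (ball x r)

lemma HasMassDensity.mul_rpow_le_setIntegral {X : Type*} [PseudoMetricSpace X]
    [MeasurableSpace X] [OpensMeasurableSpace X] {μ : Measure X} [IsFiniteMeasure μ] {K : Set X}
    {r₀ T : ℝ} (hμ : HasMassDensity μ K r₀ T) (hK : MeasurableSet K) (hμK : μ Kᶜ = 0)
    {f : X → ℝ} (hf : IntegrableOn f K μ) (hf₀ : ∀ w ∈ K, 0 ≤ f w) {z : X} {r c : ℝ}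
    (hz : z ∈ K) (hr : 0 < r) (hrr₀ : r < r₀) (hc : 0 ≤ c) (hcf : ∀ w ∈ ball z r ∩ K, c ≤ f w) :
    c * r ^ T ≤ ∫ w in K, f w ∂μ := by
  have hmass : r ^ T ≤ μ.real (ball z r ∩ K) := by
    rw [measureReal_def, measure_inter_conull hμK]
    exact (ENNReal.ofReal_le_iff_le_toReal (measure_ne_top μ _)).1 (hμ z hz r hr hrr₀)
  calc c * r ^ T ≤ c * μ.real (ball z r ∩ K) := mul_le_mul_of_nonneg_left hmass hc
    _ ≤ ∫ w in ball z r ∩ K, f w ∂μ :=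
      setIntegral_ge_of_const_le_real (measurableSet_ball.inter hK) (measure_ne_top μ _) hcf
        (hf.mono_set inter_subset_right)
    _ ≤ ∫ w in K, f w ∂μ :=
      setIntegral_mono_set hf (ae_restrict_of_forall_mem hK hf₀) inter_subset_right.eventuallyLE

lemma one_sub_rpow_neg_le {α h : ℝ} (hα : 0 ≤ α) (hh₀ : 0 ≤ h) (hh : h ≤ 1 / 2)
    (hαh : 4 * α * h ≤ 1) : (1 - h) ^ (-α) ≤ 1 + 4 * α * h := by
  have hlog : -log (1 - h) ≤ 2 * h := by
    have h1 : 0 < 1 - h := by linarith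
    have := one_sub_inv_le_log_of_pos h1
    have : (1 - h)⁻¹ ≤ 1 + 2 * h := by rw [inv_le_iff_one_le_mul₀ h1]; nlinarith
    linarith
  -- `exp x ≤ 1 / (1 - x) ≤ 1 + 2 x` for `0 ≤ x ≤ 1 / 2`, applied to `x = 2 α h`
  have hexp : exp (2 * α * h) ≤ 1 + 4 * α * h := by
    rcases (mul_nonneg (mul_nonneg zero_le_two hα) hh₀).eq_or_lt with h0 | h0
    · rw [← h0, exp_zero]; linarith
    · have h1 := exp_bound_div_one_sub_of_interval' h0 (by linarith)
      refine h1.le.trans ?_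
      rw [div_le_iff₀ (by linarith)]
      nlinarith
  calc (1 - h) ^ (-α) = exp (-log (1 - h) * α) := by
        rw [rpow_def_of_pos (by linarith)]; ring_nf
    _ ≤ exp (2 * α * h) := exp_le_exp.2 (by nlinarith)
    _ ≤ 1 + 4 * α * h := hexp

lemma rpow_neg_le_rpow_neg_add {α δ h t t' : ℝ} (hα : 0 ≤ α) (hδ : 0 < δ) (hδt : δ ≤ t)
    (hh₀ : 0 ≤ h) (hh : h ≤ 1 / 2) (hαh : 4 * α * h ≤ 1) (ht' : t - h * δ ≤ t') :
    t' ^ (-α) ≤ t ^ (-α) + 4 * α * h * δ ^ (-α) := by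
  have ht : 0 < t := hδ.trans_le hδt
  have hht' : (1 - h) * t ≤ t' := by nlinarith
  calc t' ^ (-α) ≤ ((1 - h) * t) ^ (-α) :=
        rpow_le_rpow_of_nonpos (mul_pos (by linarith) ht) hht' (by linarith)
    _ = (1 - h) ^ (-α) * t ^ (-α) := mul_rpow (by linarith) ht.le
    _ ≤ (1 + 4 * α * h) * t ^ (-α) :=
        mul_le_mul_of_nonneg_right (one_sub_rpow_neg_le hα hh₀ hh hαh) (rpow_nonneg ht.le _)
    _ ≤ t ^ (-α) + 4 * α * h * δ ^ (-α) := by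
        have := rpow_le_rpow_of_nonpos hδ hδt (neg_nonpos.2 hα)
        nlinarith [mul_nonneg (mul_nonneg (by norm_num : (0:ℝ) ≤ 4) hα) hh₀]

section rieszF

variable {d : ℕ} {α : ℝ} {n : ℕ} {Q : EuclideanSpace ℝ (Fin d) → ℝ}
  {x : Fin (n - 1) → EuclideanSpace ℝ (Fin d)} {y w : EuclideanSpace ℝ (Fin d)}

lemma rieszF_of_notMem (hy : y ∉ range x) :
    rieszF α n Q x y = exp (-(∑ j, ‖y - x j‖ ^ (-α)) - 2 * n * Q y) :=
  if_neg hy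

lemma rieszF_nonneg : 0 ≤ rieszF α n Q x y := by
  unfold rieszF; split_ifs <;> positivity

lemma rieszF_le_exp {s Λ : ℝ} (hs : y ∉ range x → s ≤ ∑ j, ‖y - x j‖ ^ (-α)) (hQ : -Q y ≤ Λ) :
    rieszF α n Q x y ≤ exp (-s + 2 * n * Λ) := by
  by_cases hy : y ∈ range x
  · rw [rieszF, if_pos hy]; positivity
  · rw [rieszF_of_notMem hy, exp_le_exp]
    nlinarith [(n.cast_nonneg : (0 : ℝ) ≤ n), hs hy]

lemma rieszF_le_exp_of_norm_sub_le {δ Λ : ℝ} (hα : 0 ≤ α) {j : Fin (n - 1)}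
    (hj : ‖y - x j‖ ≤ δ) (hQ : -Q y ≤ Λ) : rieszF α n Q x y ≤ exp (-δ ^ (-α) + 2 * n * Λ) := by
  refine rieszF_le_exp (fun hy => ?_) hQ
  have hyj : 0 < ‖y - x j‖ := norm_pos_iff.2 (sub_ne_zero.2 fun h => hy ⟨j, h.symm⟩)
  calc δ ^ (-α) ≤ ‖y - x j‖ ^ (-α) := rpow_le_rpow_of_nonpos hyj hj (neg_nonpos.2 hα)
    _ ≤ ∑ j, ‖y - x j‖ ^ (-α) :=
      Finset.single_le_sum (f := fun j => ‖y - x j‖ ^ (-α)) (fun _ _ => by positivity)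
        (Finset.mem_univ j)

lemma exp_le_rieszF {ρ Λ : ℝ} (hα : 0 ≤ α) (hρ : 0 < ρ) (hw : ∀ j, ρ ≤ ‖w - x j‖)
    (hQ : Q w ≤ Λ) : exp (-(n * ρ ^ (-α)) - 2 * n * Λ) ≤ rieszF α n Q x w := by
  have hw' : w ∉ range x := by
    rintro ⟨j, rfl⟩
    simpa using hρ.trans_le (hw j)
  have hsum : ∑ j, ‖w - x j‖ ^ (-α) ≤ n * ρ ^ (-α) :=
    calc ∑ j, ‖w - x j‖ ^ (-α) ≤ ∑ _j : Fin (n - 1), ρ ^ (-α) :=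
          Finset.sum_le_sum fun j _ => rpow_le_rpow_of_nonpos hρ (hw j) (neg_nonpos.2 hα)
      _ ≤ n * ρ ^ (-α) := by
          simp only [Finset.sum_const, Finset.card_univ, Fintype.card_fin, nsmul_eq_mul]
          gcongr
          exact_mod_cast n.sub_le 1
  rw [rieszF_of_notMem hw', exp_le_exp]
  nlinarith [(n.cast_nonneg : (0 : ℝ) ≤ n)]

lemma rieszF_mul_exp_le {ε η : ℝ} (hw : w ∉ range x) (hε : 0 ≤ ε)
    (hterm : ∀ j, ‖w - x j‖ ^ (-α) ≤ ‖y - x j‖ ^ (-α) + ε) (hQ : Q w ≤ Q y + η) :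
    rieszF α n Q x y * exp (-(n * ε + 2 * n * η)) ≤ rieszF α n Q x w := by
  by_cases hy : y ∈ range x
  · rw [rieszF, if_pos hy, zero_mul]; exact rieszF_nonneg
  have hsum : ∑ j, ‖w - x j‖ ^ (-α) ≤ ∑ j, ‖y - x j‖ ^ (-α) + n * ε :=
    calc ∑ j, ‖w - x j‖ ^ (-α) ≤ ∑ j, (‖y - x j‖ ^ (-α) + ε) :=
          Finset.sum_le_sum fun j _ => hterm j
      _ ≤ ∑ j, ‖y - x j‖ ^ (-α) + n * ε := by
          simp only [Finset.sum_add_distrib, Finset.sum_const, Finset.card_univ,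
            Fintype.card_fin, nsmul_eq_mul]
          gcongr
          exact_mod_cast n.sub_le 1
  rw [rieszF_of_notMem hy, rieszF_of_notMem hw, ← exp_add, exp_le_exp]
  nlinarith [(n.cast_nonneg : (0 : ℝ) ≤ n)]

lemma integrableOn_rieszF {μ : Measure (EuclideanSpace ℝ (Fin d))} [IsFiniteMeasure μ]
    {K : Set (EuclideanSpace ℝ (Fin d))} (hK : IsCompact K) (hQ : Continuous Q) :
    IntegrableOn (rieszF α n Q x) K μ := by
  obtain ⟨Λ, hΛ⟩ := hK.exists_bound_of_continuousOn hQ.continuousOn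
  have hmeas : Measurable (rieszF α n Q x) := by
    refine Measurable.ite (finite_range x).measurableSet measurable_const ?_
    fun_prop
  refine Measure.integrableOn_of_bounded (M := exp (2 * n * Λ)) (measure_ne_top μ K)
    hmeas.aestronglyMeasurable ((ae_restrict_mem hK.measurableSet).mono fun w hw => ?_)
  rw [norm_of_nonneg rieszF_nonneg]
  simpa using rieszF_le_exp (s := 0) (fun _ => Finset.sum_nonneg fun j _ => by positivity)
    ((neg_le_abs _).trans (hΛ w hw))

end rieszF

/-- `D` is the distance between two points of a continuum in `K`, `Λ` bounds `|Q|` on `K` and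
`L` is a Lipschitz constant of `Q` on `K`. -/
structure RieszBMParams where
  α : ℝ
  D : ℝ
  r₀ : ℝ
  T : ℝ
  Λ : ℝ
  L : ℝ
  α_pos : 0 < α
  D_pos : 0 < D
  r₀_pos : 0 < r₀
  T_pos : 0 < T
  Λ_pos : 0 < Λ
  L_pos : 0 < L

namespace RieszBMParams

variable (c : RieszBMParams) {n : ℕ}

/-! The ball of radius `freeRadius n` about the charge-free point of the continuum stays
`freeDist n` away from the charges, `threshold n` is the exponent that `|y - x_j| ^ (-α)` must
beat, and `stableRadius n` is `γ_n`. -/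

noncomputable def freeDist (n : ℕ) : ℝ := c.D / (8 * n)

noncomputable def freeRadius (n : ℕ) : ℝ := min (c.freeDist n) (c.r₀ / 2)

noncomputable def threshold (n : ℕ) : ℝ :=
  n * c.freeDist n ^ (-c.α) + 4 * n * c.Λ + c.T / c.freeRadius n

noncomputable def nearDist (n : ℕ) : ℝ := c.threshold n ^ (-1 / c.α)

noncomputable def ratio (n : ℕ) : ℝ :=
  min (1 / (4 * c.α * n * c.threshold n)) (min (1 / 2) (1 / (4 * c.α)))

noncomputable def stableRadius (n : ℕ) : ℝ :=
  min (c.nearDist n * c.ratio n) (min (1 / (n * c.L)) (c.r₀ / 2))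

noncomputable def bmConst (n : ℕ) : ℝ := exp (3 + c.T * |log (c.stableRadius n)|)

section

variable (hn : 1 ≤ n)
include hn

lemma freeDist_pos : 0 < c.freeDist n := by
  have := (Nat.cast_pos.2 hn : (0 : ℝ) < n); have := c.D_pos; unfold freeDist; positivity

lemma four_mul_freeDist_lt : 4 * ((n - 1 : ℕ) : ℝ) * c.freeDist n < c.D := by
  have hn' := (Nat.cast_pos.2 hn : (0 : ℝ) < n)
  rw [freeDist, Nat.cast_sub hn, Nat.cast_one, mul_div_assoc', div_lt_iff₀ (by positivity)]
  nlinarith [c.D_pos]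

lemma freeRadius_pos : 0 < c.freeRadius n :=
  lt_min (c.freeDist_pos hn) (half_pos c.r₀_pos)

lemma threshold_pos : 0 < c.threshold n := by
  have := (Nat.cast_pos.2 hn : (0 : ℝ) < n); have := c.freeDist_pos hn; have := c.freeRadius_pos hn
  have := c.Λ_pos; have := c.T_pos
  unfold threshold; positivity

lemma nearDist_pos : 0 < c.nearDist n := rpow_pos_of_pos (c.threshold_pos hn) _

lemma nearDist_rpow_neg : c.nearDist n ^ (-c.α) = c.threshold n := by
  rw [nearDist, ← rpow_mul (c.threshold_pos hn).le, div_mul_eq_mul_div, neg_mul_neg, one_mul,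
    div_self c.α_pos.ne', rpow_one]

lemma ratio_pos : 0 < c.ratio n := by
  have := (Nat.cast_pos.2 hn : (0 : ℝ) < n); have := c.threshold_pos hn; have := c.α_pos
  unfold ratio; positivity

lemma four_mul_ratio_mul_nearDist_rpow_le :
    4 * c.α * c.ratio n * c.nearDist n ^ (-c.α) ≤ 1 / n := by
  have := (Nat.cast_pos.2 hn : (0 : ℝ) < n); have := c.threshold_pos hn; have := c.α_pos
  have h : c.ratio n ≤ 1 / (4 * c.α * n * c.threshold n) := min_le_left _ _
  rw [le_div_iff₀ (by positivity)] at h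
  rw [c.nearDist_rpow_neg hn, le_div_iff₀ (by positivity)]
  calc 4 * c.α * c.ratio n * c.threshold n * n = c.ratio n * (4 * c.α * n * c.threshold n) := by
        ring
    _ ≤ 1 := h

lemma stableRadius_pos : 0 < c.stableRadius n := by
  have := (Nat.cast_pos.2 hn : (0 : ℝ) < n); have := c.nearDist_pos hn; have := c.ratio_pos hn
  have := c.L_pos; have := c.r₀_pos
  unfold stableRadius; positivity

lemma one_le_bmConst_mul :
    1 ≤ c.bmConst n * (exp (-3) * c.stableRadius n ^ c.T) := by
  rw [bmConst, rpow_def_of_pos (c.stableRadius_pos hn), ← exp_add, ← exp_add]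
  refine one_le_exp ?_
  nlinarith [neg_abs_le (log (c.stableRadius n)), c.T_pos]

lemma exp_neg_threshold_le :
    exp (-c.threshold n + 2 * n * c.Λ) ≤
      exp (-(n * c.freeDist n ^ (-c.α)) - 2 * n * c.Λ) * c.freeRadius n ^ c.T := by
  have hs := c.freeRadius_pos hn
  have hlog : -log (c.freeRadius n) ≤ 1 / c.freeRadius n := by
    have := log_le_sub_one_of_pos (inv_pos.2 hs)
    rw [log_inv] at this
    rw [one_div]; linarith
  rw [rpow_def_of_pos hs, ← exp_add, exp_le_exp, threshold]
  have := mul_le_mul_of_nonneg_left hlog c.T_pos.le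
  rw [mul_one_div] at this
  nlinarith

end

lemma freeRadius_le_freeDist : c.freeRadius n ≤ c.freeDist n := min_le_left _ _

lemma freeRadius_lt_r₀ : c.freeRadius n < c.r₀ :=
  (min_le_right _ _).trans_lt (half_lt_self c.r₀_pos)

lemma ratio_le_half : c.ratio n ≤ 1 / 2 := (min_le_right _ _).trans (min_le_left _ _)

lemma four_mul_ratio_le_one : 4 * c.α * c.ratio n ≤ 1 := by
  have h : c.ratio n ≤ 1 / (4 * c.α) := (min_le_right _ _).trans (min_le_right _ _)
  rwa [le_div_iff₀' (by linarith [c.α_pos])] at h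

lemma stableRadius_le_nearDist_mul_ratio : c.stableRadius n ≤ c.nearDist n * c.ratio n :=
  min_le_left _ _

lemma stableRadius_le_inv : c.stableRadius n ≤ 1 / (n * c.L) :=
  (min_le_right _ _).trans (min_le_left _ _)

lemma stableRadius_lt_r₀ : c.stableRadius n < c.r₀ :=
  ((min_le_right _ _).trans (min_le_right _ _)).trans_lt (half_lt_self c.r₀_pos)

lemma one_le_bmConst : 1 ≤ c.bmConst n :=
  one_le_exp (by have := c.T_pos; positivity)

lemma polyBounded_stableRadius : PolyBounded c.stableRadius := by
  have hfree : PolyBounded c.freeDist :=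
    (PolyBounded.const c.D_pos).div ((PolyBounded.const (by norm_num)).mul .natCast)
  have hrad : PolyBounded c.freeRadius := hfree.min (.const (half_pos c.r₀_pos))
  have hthr : PolyBounded c.threshold :=
    ((PolyBounded.natCast.mul (hfree.rpow _)).add
      (((PolyBounded.const (by norm_num)).mul .natCast).mul (.const c.Λ_pos))).add
      ((PolyBounded.const c.T_pos).div hrad)
  have hα := c.α_pos
  have hratio : PolyBounded c.ratio :=
    ((PolyBounded.const one_pos).div ((((PolyBounded.const (by norm_num)).mul
      (.const hα)).mul .natCast).mul hthr)).min
      ((PolyBounded.const (by norm_num)).min (.const (by positivity)))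
  exact ((hthr.rpow _).mul hratio).min (((PolyBounded.const one_pos).div
    (PolyBounded.natCast.mul (.const c.L_pos))).min (.const (half_pos c.r₀_pos)))

lemma tendsto_bmConst_rpow :
    Tendsto (fun n : ℕ => c.bmConst n ^ ((1 : ℝ) / n)) atTop (𝓝 1) := by
  have hnat : Tendsto (fun n : ℕ => ‖(n : ℝ)‖) atTop atTop :=
    tendsto_norm_atTop_atTop.comp tendsto_natCast_atTop_atTop
  have hlo : (fun n : ℕ => 3 + c.T * |log (c.stableRadius n)|) =o[atTop] (fun n => (n : ℝ)) :=
    (isLittleO_const_left.2 (Or.inr hnat)).add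
      (by simpa only [norm_eq_abs] using
        c.polyBounded_stableRadius.isLittleO_log.norm_left.const_mul_left c.T)
  have := (continuous_exp.tendsto 0).comp hlo.tendsto_div_nhds_zero
  rw [exp_zero] at this
  refine this.congr fun n => ?_
  simp only [Function.comp, bmConst, rpow_def_of_pos (exp_pos _), log_exp, mul_one_div]

section

variable {d : ℕ} {K : Set (EuclideanSpace ℝ (Fin d))} {μ : Measure (EuclideanSpace ℝ (Fin d))}
  [IsFiniteMeasure μ] {Q : EuclideanSpace ℝ (Fin d) → ℝ}
  {x : Fin (n - 1) → EuclideanSpace ℝ (Fin d)} {y : EuclideanSpace ℝ (Fin d)}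

lemma rieszF_le_setIntegral_of_near (hK : IsCompact K) (hQ : Continuous Q)
    (hΛ : ∀ w ∈ K, |Q w| ≤ c.Λ) (hμ : HasMassDensity μ K c.r₀ c.T) (hμK : μ Kᶜ = 0)
    {C : Set (EuclideanSpace ℝ (Fin d))} (hCK : C ⊆ K) (hC : IsPreconnected C)
    {a b : EuclideanSpace ℝ (Fin d)} (ha : a ∈ C) (hb : b ∈ C) (hab : ‖a - b‖ = c.D)
    (hn : 1 ≤ n) (hy : y ∈ K) {j : Fin (n - 1)} (hj : ‖y - x j‖ ≤ c.nearDist n) :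
    rieszF c.α n Q x y ≤ ∫ w in K, rieszF c.α n Q x w ∂μ := by
  obtain ⟨z, hzC, hz⟩ := hC.exists_forall_le_dist ha hb x (s := 2 * c.freeDist n) <| by
    rw [Fintype.card_fin, dist_eq_norm, hab]
    linarith [c.four_mul_freeDist_lt hn]
  have hfree : ∀ w ∈ ball z (c.freeRadius n) ∩ K,
      exp (-(n * c.freeDist n ^ (-c.α)) - 2 * n * c.Λ) ≤ rieszF c.α n Q x w := by
    rintro w ⟨hwz, hwK⟩
    refine exp_le_rieszF c.α_pos.le (c.freeDist_pos hn) (fun i => ?_)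
      ((le_abs_self _).trans (hΛ w hwK))
    have := dist_triangle_left z (x i) w
    rw [mem_ball] at hwz
    rw [← dist_eq_norm]
    linarith [hz i, c.freeRadius_le_freeDist (n := n)]
  calc rieszF c.α n Q x y ≤ exp (-c.threshold n + 2 * n * c.Λ) := by
        rw [← c.nearDist_rpow_neg hn]
        exact rieszF_le_exp_of_norm_sub_le c.α_pos.le hj ((neg_le_abs _).trans (hΛ y hy))
    _ ≤ exp (-(n * c.freeDist n ^ (-c.α)) - 2 * n * c.Λ) * c.freeRadius n ^ c.T :=
        c.exp_neg_threshold_le hn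
    _ ≤ ∫ w in K, rieszF c.α n Q x w ∂μ :=
        hμ.mul_rpow_le_setIntegral hK.measurableSet hμK (integrableOn_rieszF hK hQ)
          (fun _ _ => rieszF_nonneg) (hCK hzC) (c.freeRadius_pos hn) c.freeRadius_lt_r₀
          (exp_pos _).le hfree

lemma rieszF_le_bmConst_mul_of_far (hK : IsCompact K) (hQ : Continuous Q)
    (hQL : ∀ v ∈ K, ∀ w ∈ K, Q w ≤ Q v + c.L * ‖w - v‖) (hμ : HasMassDensity μ K c.r₀ c.T)
    (hμK : μ Kᶜ = 0) (hn : 1 ≤ n) (hy : y ∈ K) (hfar : ∀ j, c.nearDist n ≤ ‖y - x j‖) :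
    rieszF c.α n Q x y ≤ c.bmConst n * ∫ w in K, rieszF c.α n Q x w ∂μ := by
  have hn₀ : (0 : ℝ) < n := Nat.cast_pos.2 hn
  have hstable : ∀ w ∈ ball y (c.stableRadius n) ∩ K,
      rieszF c.α n Q x y * exp (-3) ≤ rieszF c.α n Q x w := by
    rintro w ⟨hwy, hwK⟩
    rw [mem_ball, dist_eq_norm] at hwy
    have hwy' : ‖y - w‖ ≤ c.ratio n * c.nearDist n := by
      rw [norm_sub_rev, mul_comm]; exact hwy.le.trans c.stableRadius_le_nearDist_mul_ratio
    have hclose : ∀ j, ‖y - x j‖ - c.ratio n * c.nearDist n ≤ ‖w - x j‖ := fun j => by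
      linarith [norm_sub_le_norm_sub_add_norm_sub y w (x j)]
    have hw : w ∉ range x := by
      rintro ⟨j, rfl⟩
      have := hclose j
      rw [sub_self, norm_zero] at this
      nlinarith [hfar j, c.ratio_le_half (n := n), c.nearDist_pos hn]
    have hterm : ∀ j, ‖w - x j‖ ^ (-c.α) ≤ ‖y - x j‖ ^ (-c.α) + 1 / n := fun j =>
      (rpow_neg_le_rpow_neg_add c.α_pos.le (c.nearDist_pos hn) (hfar j) (c.ratio_pos hn).le
        c.ratio_le_half c.four_mul_ratio_le_one (hclose j)).trans
        (add_le_add_right (c.four_mul_ratio_mul_nearDist_rpow_le hn) _)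
    have hQw : Q w ≤ Q y + 1 / n := by
      have := mul_le_mul_of_nonneg_left (hwy.le.trans c.stableRadius_le_inv) c.L_pos.le
      rw [mul_one_div, mul_comm (n : ℝ), ← div_div, div_self c.L_pos.ne'] at this
      linarith [hQL y hy w hwK]
    have h3 : (n : ℝ) * (1 / n) + 2 * n * (1 / n) = 3 := by field_simp; norm_num
    simpa only [h3] using rieszF_mul_exp_le hw (by positivity) hterm hQw
  have hI := hμ.mul_rpow_le_setIntegral hK.measurableSet hμK (integrableOn_rieszF hK hQ)
    (fun _ _ => rieszF_nonneg) hy (c.stableRadius_pos hn) c.stableRadius_lt_r₀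
    (mul_nonneg rieszF_nonneg (exp_pos _).le) hstable
  calc rieszF c.α n Q x y
      ≤ rieszF c.α n Q x y * (c.bmConst n * (exp (-3) * c.stableRadius n ^ c.T)) :=
        le_mul_of_one_le_right rieszF_nonneg (c.one_le_bmConst_mul hn)
    _ = c.bmConst n * (rieszF c.α n Q x y * exp (-3) * c.stableRadius n ^ c.T) := by ring
    _ ≤ c.bmConst n * ∫ w in K, rieszF c.α n Q x w ∂μ :=
        mul_le_mul_of_nonneg_left hI (exp_pos _).le

end

end RieszBMParams

theorem exists_bernstein_markov_of_isPreconnected {d : ℕ} {α : ℝ} (hα : 0 < α)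
    {K C : Set (EuclideanSpace ℝ (Fin d))} (hK : IsCompact K) (hCK : C ⊆ K)
    (hC : IsPreconnected C) {a b : EuclideanSpace ℝ (Fin d)} (ha : a ∈ C) (hb : b ∈ C)
    (hab : a ≠ b) {Q : EuclideanSpace ℝ (Fin d) → ℝ} (hQ : ContDiff ℝ 1 Q)
    {μ : Measure (EuclideanSpace ℝ (Fin d))} [IsFiniteMeasure μ] (hμK : μ Kᶜ = 0)
    {r₀ T : ℝ} (hr₀ : 0 < r₀) (hT : 0 < T) (hμ : HasMassDensity μ K r₀ T) :
    ∃ Mn : ℕ → ℝ, (∀ n, 0 < Mn n) ∧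
      Tendsto (fun n : ℕ => Mn n ^ ((1 : ℝ) / (n : ℝ))) atTop (nhds 1) ∧
      ∀ n : ℕ, 2 ≤ n → ∀ x : Fin (n - 1) → EuclideanSpace ℝ (Fin d), ∀ y ∈ K,
        rieszF α n Q x y ≤ Mn n * ∫ w in K, rieszF α n Q x w ∂μ := by
  obtain ⟨Λ, hΛ⟩ := hK.exists_bound_of_continuousOn hQ.continuous.continuousOn
  obtain ⟨R, hR⟩ := hK.isBounded.subset_closedBall 0
  obtain ⟨L, hL⟩ := hQ.contDiffOn.exists_lipschitzOnWith one_ne_zero (convex_closedBall 0 R)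
    (isCompact_closedBall 0 R)
  let c : RieszBMParams := ⟨α, ‖a - b‖, r₀, T, |Λ| + 1, L + 1, hα,
    norm_pos_iff.2 (sub_ne_zero.2 hab), hr₀, hT, by positivity, by positivity⟩
  have hΛc : ∀ w ∈ K, |Q w| ≤ c.Λ := fun w hw => by
    have := hΛ w hw
    rw [norm_eq_abs] at this
    linarith [le_abs_self Λ]
  have hQL : ∀ v ∈ K, ∀ w ∈ K, Q w ≤ Q v + c.L * ‖w - v‖ := fun v hv w hw => by
    have := (hL.weaken (le_add_of_nonneg_right zero_le_one)).dist_le_mul w (hR hw) v (hR hv)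
    rw [dist_eq_norm, dist_eq_norm, norm_eq_abs] at this
    push_cast at this
    linarith [le_abs_self (Q w - Q v)]
  refine ⟨c.bmConst, fun n => exp_pos _, c.tendsto_bmConst_rpow, fun n hn x y hy => ?_⟩
  have hn₁ : 1 ≤ n := one_le_two.trans hn
  by_cases hfar : ∀ j, c.nearDist n ≤ ‖y - x j‖
  · exact c.rieszF_le_bmConst_mul_of_far hK hQ.continuous hQL hμ hμK hn₁ hy hfar
  · obtain ⟨j, hj⟩ := not_forall.1 hfar
    refine (c.rieszF_le_setIntegral_of_near hK hQ.continuous hΛc hμ hμK hCK hC ha hb rfl hn₁ hy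
      (not_le.1 hj).le).trans (le_mul_of_one_le_left ?_ c.one_le_bmConst)
    exact setIntegral_nonneg hK.measurableSet fun _ _ => rieszF_nonneg

theorem riesz_bernstein_markov_general {d m : ℕ} (α : ℝ) (hα : 0 < α) (hm : 1 ≤ m)
    (K : Set (EuclideanSpace ℝ (Fin d)))
    (M : Type) [TopologicalSpace M] [ChartedSpace (EuclideanSpace ℝ (Fin m)) M] [CompactSpace M]
    (g : M → EuclideanSpace ℝ (Fin d))
    (hemb : Topology.IsEmbedding g)
    (hK : K = Set.range g)
    (Q : EuclideanSpace ℝ (Fin d) → ℝ) (hQ : ContDiff ℝ 1 Q)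
    (μ : Measure (EuclideanSpace ℝ (Fin d))) [IsFiniteMeasure μ] (hμK : μ Kᶜ = 0)
    (r₀ T : ℝ) (hr₀ : 0 < r₀) (hT : 0 < T)
    (hmass : ∀ x ∈ K, ∀ r : ℝ, 0 < r → r < r₀ →
      ENNReal.ofReal (r ^ T) ≤ μ (Metric.ball x r)) :
    ∃ Mn : ℕ → ℝ, (∀ n, 0 < Mn n) ∧
      Tendsto (fun n : ℕ => Mn n ^ ((1 : ℝ) / (n : ℝ))) atTop (nhds 1) ∧
      ∀ n : ℕ, 2 ≤ n → ∀ x : Fin (n - 1) → EuclideanSpace ℝ (Fin d),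
        (∀ j, x j ∈ K) → ∀ y ∈ K,
          rieszF α n Q x y ≤ Mn n * ∫ w in K, rieszF α n Q x w ∂μ := by
  subst hK
  rcases isEmpty_or_nonempty M with hM | ⟨⟨p⟩⟩
  · exact ⟨fun _ => 1, fun _ => one_pos, by simp, fun _ _ _ _ y ⟨q, _⟩ => isEmptyElim q⟩
  have : NeZero m := ⟨by omega⟩
  obtain ⟨a, ha, b, hb, hab⟩ :=
    (ChartedSpace.nontrivial_connectedComponent (H := EuclideanSpace ℝ (Fin m)) p).image
      hemb.injective
  obtain ⟨Mn, hpos, hlim, hbound⟩ := exists_bernstein_markov_of_isPreconnected hα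
    (isCompact_range hemb.continuous) (image_subset_range g _)
    (isPreconnected_connectedComponent.image g hemb.continuous.continuousOn) ha hb hab hQ hμK
    hr₀ hT hmass
  exact ⟨Mn, hpos, hlim, fun n hn x _ => hbound n hn x⟩

/-- Bernstein–Markov-type inequality on the Riesz classes `P_n^Q`:
if `K ⊂ ℝ^d` is a compact smooth `m`-dimensional embedded submanifold (image of a smooth
embedding `g` of a compact smooth `m`-manifold `M`), `Q` is `C¹`, and `μ` is a finite
measure on `K` satisfying the mass density condition `μ(B(x,r)) ≥ r^T` for `x ∈ K`,
`0 < r < r₀`, then there are constants `M_n > 0` with `M_n^{1/n} → 1` such that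
`sup_K f ≤ M_n ∫_K f dμ` for every `f ∈ P_n^Q`. -/
theorem riesz_bernstein_markov {d m : ℕ} (hd : 2 ≤ d) (α : ℝ) (hα : 0 < α)
    (hαd : α ≤ (d : ℝ)) (hm : 1 ≤ m) (hmd : m ≤ d)
    (K : Set (EuclideanSpace ℝ (Fin d)))
    (M : Type) [TopologicalSpace M] [ChartedSpace (EuclideanSpace ℝ (Fin m)) M]
    [IsManifold (𝓡 m) (⊤ : ℕ∞) M] [CompactSpace M]
    (g : M → EuclideanSpace ℝ (Fin d))
    (hg : ContMDiff (𝓡 m) 𝓘(ℝ, EuclideanSpace ℝ (Fin d)) (⊤ : ℕ∞) g)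
    (hemb : Topology.IsEmbedding g)
    (himm : ∀ p : M, Function.Injective (mfderiv (𝓡 m) 𝓘(ℝ, EuclideanSpace ℝ (Fin d)) g p))
    (hK : K = Set.range g)
    (Q : EuclideanSpace ℝ (Fin d) → ℝ) (hQ : ContDiff ℝ 1 Q)
    (μ : Measure (EuclideanSpace ℝ (Fin d))) [IsFiniteMeasure μ] (hμK : μ Kᶜ = 0)
    (r₀ T : ℝ) (hr₀ : 0 < r₀) (hT : 0 < T)
    (hmass : ∀ x ∈ K, ∀ r : ℝ, 0 < r → r < r₀ →
      ENNReal.ofReal (r ^ T) ≤ μ (Metric.ball x r)) :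
    ∃ Mn : ℕ → ℝ, (∀ n, 0 < Mn n) ∧
      Tendsto (fun n : ℕ => Mn n ^ ((1 : ℝ) / (n : ℝ))) atTop (nhds 1) ∧
      ∀ n : ℕ, 2 ≤ n → ∀ x : Fin (n - 1) → EuclideanSpace ℝ (Fin d),
        (∀ j, x j ∈ K) → ∀ y ∈ K,
          rieszF α n Q x y ≤ Mn n * ∫ w in K, rieszF α n Q x w ∂μ :=
  riesz_bernstein_markov_general α hα hm K M g hemb hK Q hQ μ hμK r₀ T hr₀ hT hmass
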